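/- (Corollary of the Projection Lemma) Let H = H₁ + H₂ be a sum of two Hermitian operators on a finite-dimensional complex Hilbert space ℋ, let S ⊆ ℋ be a nonzero subspace with H₁ψ = 0 for every ψ ∈ S and ⟨ψ, H₁ψ⟩ ≥ J‖ψ‖² for every ψ ∈ S^⊥, and set K := ‖H₂‖ with J > 2K. Then for any δ ≥ 0 and any unit vector ψ satisfying ⟨ψ, Hψ⟩ ≤ λ(H) + δ, there exists a unit vector ψ′ ∈ S such that |⟨ψ, ψ′⟩|² ≥ 1 − ((K + √(K² + δ(J − 2K)))/(J − 2K))². -/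

import Mathlib

/-!
Write `ψ = p + q` with `p ∈ S` and `q ∈ Sᗮ`. Since `H₁` vanishes on `S`, testing `H` on unit
vectors of `S` gives `λ(H) ≤ K`, and `⟨p, H p⟩ = ⟨p, H₂ p⟩ ≥ λ(H) ‖p‖²`. Expanding the energy,
`⟨ψ, H ψ⟩ ≥ J ‖q‖² + λ(H) (1 - ‖q‖²) - 2K ‖q‖ - K ‖q‖²`, so `⟨ψ, H ψ⟩ ≤ λ(H) + δ` forces
`(J - 2K) ‖q‖² ≤ δ + 2K ‖q‖`: `‖q‖` is at most the larger root of this quadratic.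
The witness is `ψ' = p / ‖p‖` (any unit vector of `S` if `p = 0`), for which
`|⟨ψ, ψ'⟩|² = ‖p‖² = 1 - ‖q‖²`.
-/

variable {E : Type*} [NormedAddCommGroup E] [InnerProductSpace ℂ E] [FiniteDimensional ℂ E]

/-- The smallest eigenvalue of a Hermitian operator `H`, equivalently the infimum of the
Rayleigh quotient `⟨ψ, Hψ⟩` over unit vectors `ψ`. -/
noncomputable def minEigenvalue (H : E →L[ℂ] E) : ℝ :=
  sInf {r : ℝ | ∃ ψ : E, ‖ψ‖ = 1 ∧ (inner (𝕜 := ℂ) ψ (H ψ)).re = r}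

open RCLike InnerProductSpace

section InnerProduct

variable {𝕜 F : Type*} [RCLike 𝕜] [NormedAddCommGroup F] [InnerProductSpace 𝕜 F]

lemma abs_re_inner_apply_le (A : F →L[𝕜] F) (x y : F) :
    |re ⟪x, A y⟫_𝕜| ≤ ‖A‖ * ‖x‖ * ‖y‖ :=
  calc |re ⟪x, A y⟫_𝕜| ≤ ‖x‖ * ‖A y‖ := (abs_re_le_norm _).trans (norm_inner_le_norm _ _)
    _ ≤ ‖x‖ * (‖A‖ * ‖y‖) := by gcongr; exact A.le_opNorm y
    _ = ‖A‖ * ‖x‖ * ‖y‖ := by ring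

lemma re_inner_apply_add_ge (A : F →L[𝕜] F) (x y : F) :
    re ⟪x, A x⟫_𝕜 - ‖A‖ * (2 * ‖x‖ * ‖y‖ + ‖y‖ ^ 2) ≤ re ⟪x + y, A (x + y)⟫_𝕜 := by
  have hxy := abs_le.mp (abs_re_inner_apply_le A x y)
  have hyx := abs_le.mp (abs_re_inner_apply_le A y x)
  have hyy := abs_le.mp (abs_re_inner_apply_le A y y)
  simp only [map_add, inner_add_left, inner_add_right]
  linarith [hxy.1, hyx.1, hyy.1]

lemma LinearMap.IsSymmetric.inner_add_apply_add_of_apply_eq_zero {A : F →L[𝕜] F}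
    (hA : (A : F →ₗ[𝕜] F).IsSymmetric) {x : F} (hx : A x = 0) (y : F) :
    ⟪x + y, A (x + y)⟫_𝕜 = ⟪y, A y⟫_𝕜 := by
  have hAxy : ⟪A x, y⟫_𝕜 = ⟪x, A y⟫_𝕜 := hA x y
  rw [map_add, hx, zero_add, inner_add_left, ← hAxy, hx, inner_zero_left, zero_add]

lemma Submodule.exists_norm_eq_one_of_ne_bot {S : Submodule 𝕜 F} (hS : S ≠ ⊥) :
    ∃ φ ∈ S, ‖φ‖ = 1 :=
  let ⟨x, hxS, hx0⟩ := S.exists_mem_ne_zero_of_ne_bot hS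
  ⟨(‖x‖⁻¹ : 𝕜) • x, S.smul_mem _ hxS, norm_smul_inv_norm hx0⟩

lemma Submodule.exists_norm_eq_one_norm_inner_eq {S : Submodule 𝕜 F} (hS : S ≠ ⊥) {p : F}
    (hp : p ∈ S) : ∃ φ ∈ S, ‖φ‖ = 1 ∧ ‖⟪p, φ⟫_𝕜‖ = ‖p‖ := by
  rcases eq_or_ne p 0 with rfl | hp0
  · obtain ⟨φ, hφS, hφ⟩ := Submodule.exists_norm_eq_one_of_ne_bot hS
    exact ⟨φ, hφS, hφ, by simp⟩
  · refine ⟨(‖p‖⁻¹ : 𝕜) • p, S.smul_mem _ hp, norm_smul_inv_norm hp0, ?_⟩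
    rw [inner_smul_right, inner_self_eq_norm_sq_to_K, norm_mul, norm_inv, norm_pow]
    simp only [norm_ofReal, abs_norm]
    field_simp

lemma Submodule.norm_add_sq_of_mem_orthogonal {S : Submodule 𝕜 F} {p q : F} (hp : p ∈ S)
    (hq : q ∈ Sᗮ) : ‖p + q‖ ^ 2 = ‖p‖ ^ 2 + ‖q‖ ^ 2 := by
  simpa only [sq] using
    norm_add_sq_eq_norm_sq_add_norm_sq_of_inner_eq_zero p q (S.inner_right_of_mem_orthogonal hp hq)

end InnerProduct

lemma le_div_of_mul_sq_le_add {a b c t : ℝ} (ha : 0 < a) (h : a * t ^ 2 ≤ c + 2 * b * t) :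
    t ≤ (b + √(b ^ 2 + c * a)) / a := by
  have hsq : (a * t - b) ^ 2 ≤ b ^ 2 + c * a := by nlinarith
  rw [le_div_iff₀ ha]
  linarith [le_abs_self (a * t - b), Real.abs_le_sqrt hsq]

section Rayleigh

variable {F : Type*} [NormedAddCommGroup F] [InnerProductSpace ℂ F]

lemma bddBelow_rayleigh (H : F →L[ℂ] F) :
    BddBelow {r : ℝ | ∃ ψ : F, ‖ψ‖ = 1 ∧ (inner (𝕜 := ℂ) ψ (H ψ)).re = r} := by
  refine ⟨-‖H‖, ?_⟩
  rintro r ⟨ψ, hψ, rfl⟩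
  have hle := abs_re_inner_apply_le H ψ ψ
  rw [hψ, mul_one, mul_one, re_to_complex] at hle
  linarith [neg_abs_le (inner (𝕜 := ℂ) ψ (H ψ)).re]

lemma minEigenvalue_le (H : F →L[ℂ] F) {φ : F} (hφ : ‖φ‖ = 1) :
    minEigenvalue H ≤ (inner (𝕜 := ℂ) φ (H φ)).re :=
  csInf_le (bddBelow_rayleigh H) ⟨φ, hφ, rfl⟩

lemma minEigenvalue_mul_norm_sq_le (H : F →L[ℂ] F) (x : F) :
    minEigenvalue H * ‖x‖ ^ 2 ≤ (inner (𝕜 := ℂ) x (H x)).re := by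
  rcases eq_or_ne x 0 with rfl | hx0
  · simp
  have hunit := minEigenvalue_le H (norm_smul_inv_norm (𝕜 := ℂ) hx0)
  rw [map_smul, inner_smul_left, inner_smul_right, RCLike.ofReal_eq_complex_ofReal,
    ← Complex.ofReal_inv, Complex.conj_ofReal, ← mul_assoc, ← Complex.ofReal_mul,
    Complex.re_ofReal_mul] at hunit
  have hx : 0 < ‖x‖ := norm_pos_iff.mpr hx0
  calc minEigenvalue H * ‖x‖ ^ 2
      ≤ ‖x‖⁻¹ * ‖x‖⁻¹ * (inner (𝕜 := ℂ) x (H x)).re * ‖x‖ ^ 2 := by gcongr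
    _ = (inner (𝕜 := ℂ) x (H x)).re := by field_simp

lemma mul_norm_sq_le_of_le_minEigenvalue_add {H₁ H₂ : F →L[ℂ] F}
    (hH₁ : (H₁ : F →ₗ[ℂ] F).IsSymmetric) {S : Submodule ℂ F} (hS : S ≠ ⊥)
    (hker : ∀ ψ ∈ S, H₁ ψ = 0) {J δ : ℝ} {p q : F} (hp : p ∈ S)
    (hq : J * ‖q‖ ^ 2 ≤ (inner (𝕜 := ℂ) q (H₁ q)).re) (hpq : ‖p‖ ^ 2 + ‖q‖ ^ 2 = 1)
    (hlow : (inner (𝕜 := ℂ) (p + q) ((H₁ + H₂) (p + q))).re ≤ minEigenvalue (H₁ + H₂) + δ) :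
    (J - 2 * ‖H₂‖) * ‖q‖ ^ 2 ≤ δ + 2 * ‖H₂‖ * ‖q‖ := by
  set K := ‖H₂‖
  set lam := minEigenvalue (H₁ + H₂)
  have hlamK : lam ≤ K := by
    obtain ⟨φ, hφS, hφ⟩ := Submodule.exists_norm_eq_one_of_ne_bot hS
    have hH₂φ := abs_re_inner_apply_le H₂ φ φ
    rw [hφ, mul_one, mul_one, re_to_complex] at hH₂φ
    calc lam ≤ (inner (𝕜 := ℂ) φ ((H₁ + H₂) φ)).re := minEigenvalue_le _ hφ
      _ = (inner (𝕜 := ℂ) φ (H₂ φ)).re := by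
        rw [add_apply, hker φ hφS, zero_add]
      _ ≤ K := (le_abs_self _).trans hH₂φ
  have hpH₂ : lam * ‖p‖ ^ 2 ≤ (inner (𝕜 := ℂ) p (H₂ p)).re := by
    simpa [hker p hp] using minEigenvalue_mul_norm_sq_le (H₁ + H₂) p
  have henergy : J * ‖q‖ ^ 2 + (inner (𝕜 := ℂ) p (H₂ p)).re - K * (2 * ‖p‖ * ‖q‖ + ‖q‖ ^ 2) ≤
      (inner (𝕜 := ℂ) (p + q) ((H₁ + H₂) (p + q))).re := by
    rw [add_apply, inner_add_right, Complex.add_re,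
      hH₁.inner_add_apply_add_of_apply_eq_zero (hker p hp)]
    have hH₂pq := re_inner_apply_add_ge H₂ p q
    rw [re_to_complex, re_to_complex] at hH₂pq
    linarith
  have hp1 : ‖p‖ ≤ 1 := by nlinarith [norm_nonneg p, norm_nonneg q]
  have hcross : K * ‖p‖ * ‖q‖ ≤ K * ‖q‖ :=
    mul_le_mul_of_nonneg_right (mul_le_of_le_one_right (norm_nonneg H₂) hp1) (norm_nonneg q)
  have hlamq : lam * ‖q‖ ^ 2 ≤ K * ‖q‖ ^ 2 := by gcongr
  rw [show ‖p‖ ^ 2 = 1 - ‖q‖ ^ 2 by linarith] at hpH₂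
  linarith

end Rayleigh

theorem projection_lemma_corollary_general
    (H₁ H₂ : E →L[ℂ] E) (hH₁ : IsSelfAdjoint H₁)
    (S : Submodule ℂ E) (hS : S ≠ ⊥) (J K : ℝ) (hK : K = ‖H₂‖)
    (hker : ∀ ψ ∈ S, H₁ ψ = 0)
    (hbig : ∀ ψ ∈ Sᗮ, J * ‖ψ‖ ^ 2 ≤ (inner (𝕜 := ℂ) ψ (H₁ ψ)).re)
    (hJ : 2 * K < J) (δ : ℝ)
    (ψ : E) (hψ : ‖ψ‖ = 1)
    (hlow : (inner (𝕜 := ℂ) ψ ((H₁ + H₂) ψ)).re ≤ minEigenvalue (H₁ + H₂) + δ) :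
    ∃ ψ' ∈ S, ‖ψ'‖ = 1 ∧
      1 - ((K + Real.sqrt (K ^ 2 + δ * (J - 2 * K))) / (J - 2 * K)) ^ 2 ≤
        ‖inner (𝕜 := ℂ) ψ ψ'‖ ^ 2 := by
  obtain ⟨p, hp, q, hq, rfl⟩ := S.exists_add_mem_mem_orthogonal ψ
  obtain ⟨ψ', hψ'S, hψ', hpψ'⟩ := Submodule.exists_norm_eq_one_norm_inner_eq hS hp
  refine ⟨ψ', hψ'S, hψ', ?_⟩
  have hpq : ‖p‖ ^ 2 + ‖q‖ ^ 2 = 1 := by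
    rw [← Submodule.norm_add_sq_of_mem_orthogonal hp hq, hψ, one_pow]
  have hquad := mul_norm_sq_le_of_le_minEigenvalue_add
    (ContinuousLinearMap.isSelfAdjoint_iff_isSymmetric.mp hH₁) hS hker hp (hbig q hq) hpq hlow
  rw [← hK] at hquad
  have hqT := le_div_of_mul_sq_le_add (by linarith) hquad
  calc 1 - ((K + Real.sqrt (K ^ 2 + δ * (J - 2 * K))) / (J - 2 * K)) ^ 2 ≤ 1 - ‖q‖ ^ 2 := by
        gcongr
    _ = ‖inner (𝕜 := ℂ) (p + q) ψ'‖ ^ 2 := by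
      rw [inner_add_left, Submodule.inner_left_of_mem_orthogonal hψ'S hq, add_zero, hpψ']
      linarith

/-- **Corollary of the Projection Lemma**: any low-energy state of `H = H₁ + H₂` has large
overlap with the subspace `S`. -/
theorem projection_lemma_corollary
    (H₁ H₂ : E →L[ℂ] E) (hH₁ : IsSelfAdjoint H₁) (hH₂ : IsSelfAdjoint H₂)
    (S : Submodule ℂ E) (hS : S ≠ ⊥) (J K : ℝ) (hK : K = ‖H₂‖)
    (hker : ∀ ψ ∈ S, H₁ ψ = 0)
    (hbig : ∀ ψ ∈ Sᗮ, J * ‖ψ‖ ^ 2 ≤ (inner (𝕜 := ℂ) ψ (H₁ ψ)).re)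
    (hJ : 2 * K < J) (δ : ℝ) (hδ : 0 ≤ δ)
    (ψ : E) (hψ : ‖ψ‖ = 1)
    (hlow : (inner (𝕜 := ℂ) ψ ((H₁ + H₂) ψ)).re ≤ minEigenvalue (H₁ + H₂) + δ) :
    ∃ ψ' ∈ S, ‖ψ'‖ = 1 ∧
      1 - ((K + Real.sqrt (K ^ 2 + δ * (J - 2 * K))) / (J - 2 * K)) ^ 2 ≤
        ‖inner (𝕜 := ℂ) ψ ψ'‖ ^ 2 :=
  projection_lemma_corollary_general H₁ H₂ hH₁ S hS J K hK hker hbig hJ δ ψ hψ hlow
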